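/- arXiv:1805.11985 — 4 statements merged into one kernel-verified Lean document; each statement's English description precedes it below -/
import Mathlib

section
/- Let f : ℝ → ℝ be continuous on [0,∞) and suppose that the map t ↦ f(t)/t is monotone nondecreasing on (0,∞) and that lim_{t→0⁺} f(t)/t = 0. Then the Ambrosetti–Rabinowitz inequality 2·F(t) ≤ t·f(t) holds for every t > 0, where F(t) = ∫₀ᵗ f(s) ds. -/
open Filter Set MeasureTheory

theorem intervalIntegral_le_of_div_le {f : ℝ → ℝ} {t c : ℝ} (ht : 0 ≤ t)
    (hf : IntervalIntegrable f volume 0 t) (h : ∀ s ∈ Ioo 0 t, f s / s ≤ c) :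
    ∫ s in (0:ℝ)..t, f s ≤ c * t ^ 2 / 2 := by
  have hlin : ∀ s ∈ Ioo 0 t, f s ≤ s * c := fun s hs =>
    (div_le_iff₀' hs.1).1 (h s hs)
  calc ∫ s in (0:ℝ)..t, f s ≤ ∫ s in (0:ℝ)..t, s * c :=
        intervalIntegral.integral_mono_on_of_le_Ioo ht hf
          ((continuous_id.mul continuous_const).intervalIntegrable 0 t) hlin
    _ = c * t ^ 2 / 2 := by
        rw [intervalIntegral.integral_mul_const, integral_id]
        ring

theorem stmt2_general (f : ℝ → ℝ)
    (hf : ContinuousOn f (Set.Ici (0 : ℝ)))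
    (hmono : MonotoneOn (fun t : ℝ => f t / t) (Set.Ioi 0)) :
    ∀ t : ℝ, 0 < t → 2 * (∫ s in (0:ℝ)..t, f s) ≤ t * f t := by
  intro t ht
  have hint : IntervalIntegrable f volume 0 t :=
    (hf.mono Icc_subset_Ici_self).intervalIntegrable_of_Icc ht.le
  have hbound := intervalIntegral_le_of_div_le ht.le hint
    fun s hs => hmono hs.1 ht hs.2.le
  calc 2 * ∫ s in (0:ℝ)..t, f s ≤ 2 * (f t / t * t ^ 2 / 2) := by gcongr
    _ = t * f t := by field_simp

/-- If `f` is continuous on `[0,∞)`, `t ↦ f(t)/t` is monotone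
nondecreasing on `(0,∞)` and `lim_{t→0⁺} f(t)/t = 0`, then the
Ambrosetti–Rabinowitz inequality `2 F(t) ≤ t f(t)` holds for every `t > 0`,
where `F(t) = ∫₀ᵗ f`. -/
theorem stmt2 (f : ℝ → ℝ)
    (hf : ContinuousOn f (Set.Ici (0 : ℝ)))
    (hmono : MonotoneOn (fun t : ℝ => f t / t) (Set.Ioi 0))
    (hlim : Tendsto (fun t : ℝ => f t / t) (nhdsWithin 0 (Set.Ioi 0)) (nhds 0)) :
    ∀ t : ℝ, 0 < t → 2 * (∫ s in (0:ℝ)..t, f s) ≤ t * f t :=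
  stmt2_general f hf hmono
end

section
/- Let N ∈ ℕ, σ ∈ (0,1) with 2σ < N, and let θ satisfy max{2, N/(N−2σ)} < θ < 2N/(N−2σ). Let W = W₁ + W₂ with W₁ ∈ L^r(ℝ^N) for some r ∈ ( N/(N(2−θ)+2σθ), 2N/(N(2−θ)+2σθ) ] and W₂ ∈ L^∞(ℝ^N). Let h ∈ L²(ℝ^N) ∩ L^{2N/(N−2σ)}(ℝ^N) and let F : ℝ → ℝ be measurable with |F(t)| ≤ C(|t|² + |t|^{θ}) for all t and some C > 0. Then there exist a constant C' ≥ 0 and a nonnegative function g ∈ L^{2N/(N(2−θ)+2σθ)}(ℝ^N) such that |(W * (F∘h))(y)| ≤ C' + g(y) for almost every y ∈ ℝ^N. -/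
/-!
Put `q = 2N/(N−2σ)` and `p = 2N/(N(2−θ)+2σθ) = q/(q−θ)`; then `p ≥ 2` and the conjugate exponent
of `p` is `q/θ`. Truncating `W₁` at height one writes `W = V + B` with `V ∈ L^{p/2}` (as `p/2 < r`)
and `B ∈ L^∞`. The growth bound on `F` and `h ∈ L² ∩ L^q` give `F ∘ h ∈ L¹ ∩ L^{q/θ}`. Hence
`|B * (F ∘ h)| ≤ ‖B‖_∞ ‖F ∘ h‖₁` is the constant, and Young's convolution inequality with
`(p/2)⁻¹ + (q/θ)⁻¹ = 1 + p⁻¹` puts `g = |V| * |F ∘ h|` in `L^p`.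
-/

open Filter Set MeasureTheory
open scoped ENNReal

namespace ENNReal

theorem rpow_mul_rpow_sub_inv (a : ℝ≥0∞) {p r : ℝ} (hp : 0 < p) (hr : 0 < r)
    (hrp : r ≤ p) : (a ^ r) ^ p⁻¹ * (a ^ r) ^ (r⁻¹ - p⁻¹) = a := by
  rw [← rpow_add_of_nonneg _ _ (inv_nonneg.2 hp.le) (sub_nonneg.2 (inv_anti₀ hr hrp)),
    ← rpow_mul]
  simp [hr.ne']

theorem rpow_le_rpow_add_rpow (c : ℝ≥0∞) {a t b : ℝ} (hat : a ≤ t) (htb : t ≤ b) :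
    c ^ t ≤ c ^ a + c ^ b := by
  rcases le_total c 1 with hc | hc
  · exact le_add_right (rpow_le_rpow_of_exponent_ge hc hat)
  · exact le_add_left (rpow_le_rpow_of_exponent_le hc htb)

theorem lintegral_rpow_mul_rpow_mul_rpow_le {α : Type*} [MeasurableSpace α] {μ : Measure α}
    {f g k : α → ℝ≥0∞} (hf : AEMeasurable f μ) (hg : AEMeasurable g μ) (hk : AEMeasurable k μ)
    {a b c : ℝ} (ha : 0 ≤ a) (hb : 0 ≤ b) (hc : 0 ≤ c) (habc : a + b + c = 1) :
    ∫⁻ x, f x ^ a * g x ^ b * k x ^ c ∂μ ≤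
      (∫⁻ x, f x ∂μ) ^ a * (∫⁻ x, g x ∂μ) ^ b * (∫⁻ x, k x ∂μ) ^ c := by
  have := lintegral_prod_norm_pow_le (μ := μ) Finset.univ (f := ![f, g, k])
    (p := ![a, b, c]) (fun i _ ↦ by fin_cases i <;> assumption)
    (by simpa [Fin.sum_univ_three] using habc) (fun i _ ↦ by fin_cases i <;> assumption)
  simpa [Fin.prod_univ_three, mul_assoc] using this

end ENNReal

namespace Real

theorem two_mul_div_eq_div_div_sub {n σ θ : ℝ} (h : n - 2 * σ ≠ 0) :
    2 * n / (n * (2 - θ) + 2 * σ * θ) = 2 * n / (n - 2 * σ) / (2 * n / (n - 2 * σ) - θ) := by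
  rw [div_sub' h, div_div_div_cancel_right₀ h]
  ring_nf

theorem two_le_div_sub {q θ : ℝ} (hq : q ≤ 2 * θ) (hθq : θ < q) : 2 ≤ q / (q - θ) := by
  rw [le_div_iff₀ (by linarith)]
  linarith

theorem holderConjugate_div_sub_div {q θ : ℝ} (hθ : 0 < θ) (hθq : θ < q) :
    (q / (q - θ)).HolderConjugate (q / θ) := by
  have hq : q ≠ 0 := by linarith
  refine ⟨?_, div_pos (by linarith) (by linarith), div_pos (by linarith) hθ⟩
  field_simp
  ring

end Real

theorem enorm_rpow_le_of_abs_le {F : ℝ → ℝ} {C a b s : ℝ}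
    (hF : ∀ t, |F t| ≤ C * (|t| ^ a + |t| ^ b)) (ha : 0 ≤ a) (hb : 0 ≤ b) (hs : 1 ≤ s) (t : ℝ) :
    ‖F t‖ₑ ^ s ≤ ENNReal.ofReal C ^ s * 2 ^ (s - 1) * (‖t‖ₑ ^ (a * s) + ‖t‖ₑ ^ (b * s)) := by
  have hFt : ‖F t‖ₑ ≤ ENNReal.ofReal C * (‖t‖ₑ ^ a + ‖t‖ₑ ^ b) := by
    simp only [Real.enorm_eq_ofReal_abs]
    rw [ENNReal.ofReal_rpow_of_nonneg (abs_nonneg t) ha,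
      ENNReal.ofReal_rpow_of_nonneg (abs_nonneg t) hb,
      ← ENNReal.ofReal_add (by positivity) (by positivity), ← ENNReal.ofReal_mul' (by positivity)]
    exact ENNReal.ofReal_le_ofReal (hF t)
  calc ‖F t‖ₑ ^ s ≤ (ENNReal.ofReal C * (‖t‖ₑ ^ a + ‖t‖ₑ ^ b)) ^ s := by gcongr
    _ ≤ ENNReal.ofReal C ^ s * (2 ^ (s - 1) * ((‖t‖ₑ ^ a) ^ s + (‖t‖ₑ ^ b) ^ s)) := by
      rw [ENNReal.mul_rpow_of_nonneg _ _ (zero_le_one.trans hs)]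
      gcongr
      exact ENNReal.rpow_add_le_mul_rpow_add_rpow _ _ hs
    _ = _ := by rw [← ENNReal.rpow_mul, ← ENNReal.rpow_mul, mul_assoc]

namespace MeasureTheory

variable {α : Type*} [MeasurableSpace α] {μ : Measure α}

theorem MemLp.lintegral_enorm_rpow_lt_top {E : Type*} [NormedAddCommGroup E] {f : α → E} {r : ℝ}
    (hr : 0 < r) (hf : MemLp f (ENNReal.ofReal r) μ) : ∫⁻ x, ‖f x‖ₑ ^ r ∂μ < ∞ := by
  simpa [hr.le] using lintegral_rpow_enorm_lt_top_of_eLpNorm_lt_top (by simpa using hr)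
    ENNReal.ofReal_ne_top hf.eLpNorm_lt_top

theorem lintegral_enorm_rpow_lt_top_of_le_of_le {E : Type*} [NormedAddCommGroup E] {f : α → E}
    {a b t : ℝ} (ha : 0 < a) (hfa : MemLp f (ENNReal.ofReal a) μ)
    (hfb : MemLp f (ENNReal.ofReal b) μ) (hat : a ≤ t) (htb : t ≤ b) :
    ∫⁻ x, ‖f x‖ₑ ^ t ∂μ < ∞ := by
  calc ∫⁻ x, ‖f x‖ₑ ^ t ∂μ
      ≤ ∫⁻ x, ‖f x‖ₑ ^ a + ‖f x‖ₑ ^ b ∂μ :=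
        lintegral_mono fun x ↦ ENNReal.rpow_le_rpow_add_rpow _ hat htb
    _ = (∫⁻ x, ‖f x‖ₑ ^ a ∂μ) + ∫⁻ x, ‖f x‖ₑ ^ b ∂μ :=
        lintegral_add_left' (hfa.1.enorm.pow_const a) _
    _ < ∞ := ENNReal.add_lt_top.2 ⟨hfa.lintegral_enorm_rpow_lt_top ha,
      hfb.lintegral_enorm_rpow_lt_top (ha.trans_le (hat.trans htb))⟩

theorem lintegral_enorm_comp_rpow_lt_top {F : ℝ → ℝ} {C a b c s : ℝ}
    (hF : ∀ t, |F t| ≤ C * (|t| ^ a + |t| ^ b)) (ha : 0 < a) (hab : a ≤ b) (hs : 1 ≤ s)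
    (hbc : b * s ≤ c) {h : α → ℝ} (hha : MemLp h (ENNReal.ofReal a) μ)
    (hhc : MemLp h (ENNReal.ofReal c) μ) :
    ∫⁻ x, ‖F (h x)‖ₑ ^ s ∂μ < ∞ := by
  have hmoment {t : ℝ} (hat : a ≤ t) (htc : t ≤ c) : ∫⁻ x, ‖h x‖ₑ ^ t ∂μ < ∞ :=
    lintegral_enorm_rpow_lt_top_of_le_of_le ha hha hhc hat htc
  have has : ∫⁻ x, ‖h x‖ₑ ^ (a * s) ∂μ < ∞ :=
    hmoment (le_mul_of_one_le_right ha.le hs)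
      ((mul_le_mul_of_nonneg_right hab (zero_le_one.trans hs)).trans hbc)
  have hbs : ∫⁻ x, ‖h x‖ₑ ^ (b * s) ∂μ < ∞ :=
    hmoment (hab.trans (le_mul_of_one_le_right (ha.le.trans hab) hs)) hbc
  calc ∫⁻ x, ‖F (h x)‖ₑ ^ s ∂μ
      ≤ ∫⁻ x, ENNReal.ofReal C ^ s * 2 ^ (s - 1) *
          (‖h x‖ₑ ^ (a * s) + ‖h x‖ₑ ^ (b * s)) ∂μ :=
        lintegral_mono fun x ↦ enorm_rpow_le_of_abs_le hF ha.le (ha.le.trans hab) hs (h x)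
    _ = ENNReal.ofReal C ^ s * 2 ^ (s - 1) *
          ((∫⁻ x, ‖h x‖ₑ ^ (a * s) ∂μ) + ∫⁻ x, ‖h x‖ₑ ^ (b * s) ∂μ) := by
        rw [lintegral_const_mul' _ _ (by finiteness),
          lintegral_add_left' (hha.1.aemeasurable.enorm.pow_const _)]
    _ < ∞ := by finiteness

theorem MemLp.exists_abs_sub_le_one {f : α → ℝ} {r t : ℝ} (hf : MemLp f (ENNReal.ofReal r) μ)
    (ht : 0 < t) (htr : t ≤ r) :
    ∃ V : α → ℝ, AEMeasurable V μ ∧ ∫⁻ x, ‖V x‖ₑ ^ t ∂μ < ∞ ∧ ∀ x, |f x - V x| ≤ 1 := by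
  set cut : ℝ → ℝ := {u | 1 < |u|}.indicator id
  have hcut : Measurable cut :=
    measurable_id.indicator (measurableSet_lt measurable_const measurable_id.abs)
  refine ⟨cut ∘ f, hcut.comp_aemeasurable hf.1.aemeasurable, ?_, fun x ↦ ?_⟩
  · refine lt_of_le_of_lt (lintegral_mono fun x ↦ ?_)
      (hf.lintegral_enorm_rpow_lt_top (ht.trans_le htr))
    by_cases hx : 1 < |f x|
    · simp only [Function.comp_apply, cut, indicator_of_mem (show f x ∈ {u | 1 < |u|} from hx),
        id]
      exact ENNReal.rpow_le_rpow_of_exponent_le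
        (by simpa [Real.enorm_eq_ofReal_abs] using hx.le) htr
    · simp [cut, indicator_of_notMem (show f x ∉ {u | 1 < |u|} from hx), ht]
  · by_cases hx : 1 < |f x|
    · simp [cut, hx]
    · simpa [cut, hx] using not_lt.1 hx

theorem MemLp.exists_ae_abs_le {f : α → ℝ} (hf : MemLp f ∞ μ) :
    ∃ M, 0 ≤ M ∧ ∀ᵐ x ∂μ, |f x| ≤ M := by
  obtain ⟨M, hM⟩ := eLpNormEssSup_lt_top_iff_isBoundedUnder.1 (by simpa using hf.eLpNorm_lt_top)
  exact ⟨M, M.2, (eventually_map.1 hM).mono fun x hx ↦ by simpa using NNReal.coe_le_coe.2 hx⟩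

theorem memLp_toReal_of_lintegral_rpow_lt_top {T : α → ℝ≥0∞} (hT : AEMeasurable T μ) {p : ℝ}
    (hp : 0 < p) (hTp : ∫⁻ x, T x ^ p ∂μ < ∞) :
    MemLp (fun x ↦ (T x).toReal) (ENNReal.ofReal p) μ := by
  have hTLp : MemLp T (ENNReal.ofReal p) μ :=
    ⟨hT.aestronglyMeasurable, (eLpNorm_lt_top_iff_lintegral_rpow_enorm_lt_top
      (by simpa using hp) ENNReal.ofReal_ne_top).2 (by simpa [hp.le] using hTp)⟩
  refine hTLp.mono'_enorm hT.ennreal_toReal.aestronglyMeasurable (ae_of_all _ fun x ↦ ?_)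
  simpa [Real.enorm_eq_ofReal_abs] using ENNReal.ofReal_toReal_le

theorem lintegral_lconvolution {G : Type*} [MeasurableSpace G] [AddGroup G] [MeasurableAdd₂ G]
    [MeasurableNeg G] {μ : Measure G} [SFinite μ] [μ.IsAddLeftInvariant] {f g : G → ℝ≥0∞}
    (hf : AEMeasurable f μ) (hg : AEMeasurable g μ) :
    ∫⁻ x, (f ⋆ₗ[μ] g) x ∂μ = (∫⁻ x, f x ∂μ) * ∫⁻ x, g x ∂μ := by
  unfold lconvolution
  have inner (y : G) : ∫⁻ x, f y * g (-y + x) ∂μ = f y * ∫⁻ x, g x ∂μ := by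
    have hg_shift : AEMeasurable (fun x ↦ g (-y + x)) μ :=
      hg.comp_quasiMeasurePreserving (measurePreserving_add_left μ (-y)).quasiMeasurePreserving
    rw [lintegral_const_mul'' _ hg_shift, lintegral_add_left_eq_self]
  rw [lintegral_lintegral_swap (by fun_prop)]
  simp_rw [inner]
  exact lintegral_mul_const'' _ hf

section Convolution

variable {G : Type*} [MeasurableSpace G] [AddCommGroup G] [MeasurableAdd₂ G] [MeasurableNeg G]
  {μ : Measure G} [SFinite μ] [μ.IsAddLeftInvariant]

theorem enorm_integral_mul_le_lconvolution_add {W V φ : G → ℝ} {M : ℝ} (hφ : AEMeasurable φ μ)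
    (hWV : ∀ᵐ x ∂μ, |W x - V x| ≤ M) (y : G) :
    ‖∫ w, W (y - w) * φ w ∂μ‖ₑ ≤
      ((fun x ↦ ‖φ x‖ₑ) ⋆ₗ[μ] fun x ↦ ‖V x‖ₑ) y + ENNReal.ofReal M * ∫⁻ w, ‖φ w‖ₑ ∂μ := by
  have hWV_shift : ∀ᵐ w ∂μ, |W (y - w) - V (y - w)| ≤ M :=
    (quasiMeasurePreserving_sub_left μ y).ae hWV
  calc ‖∫ w, W (y - w) * φ w ∂μ‖ₑ
      ≤ ∫⁻ w, ‖W (y - w) * φ w‖ₑ ∂μ := enorm_integral_le_lintegral_enorm _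
    _ ≤ ∫⁻ w, ‖φ w‖ₑ * ‖V (-w + y)‖ₑ + ENNReal.ofReal M * ‖φ w‖ₑ ∂μ := by
        refine lintegral_mono_ae (hWV_shift.mono fun w hw ↦ ?_)
        have hW : ‖W (y - w)‖ₑ ≤ ‖V (y - w)‖ₑ + ENNReal.ofReal M := by
          simp only [Real.enorm_eq_ofReal_abs]
          refine (ENNReal.ofReal_le_ofReal ?_).trans ENNReal.ofReal_add_le
          linarith [abs_sub_abs_le_abs_sub (W (y - w)) (V (y - w))]
        rw [enorm_mul, neg_add_eq_sub]
        calc ‖W (y - w)‖ₑ * ‖φ w‖ₑ ≤ (‖V (y - w)‖ₑ + ENNReal.ofReal M) * ‖φ w‖ₑ := by gcongr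
          _ = _ := by ring
    _ = ((fun x ↦ ‖φ x‖ₑ) ⋆ₗ[μ] fun x ↦ ‖V x‖ₑ) y + ENNReal.ofReal M * ∫⁻ w, ‖φ w‖ₑ ∂μ := by
        rw [lintegral_add_right' _ (hφ.enorm.const_mul _),
          lintegral_const_mul' _ _ ENNReal.ofReal_ne_top]
        rfl

variable [μ.IsNegInvariant] {f g : G → ℝ≥0∞} {p r s : ℝ}

theorem lconvolution_le_lconvolution_rpow (hf : AEMeasurable f μ) (hg : AEMeasurable g μ)
    (hp : 0 < p) (hr : 0 < r) (hs : 0 < s) (hrp : r ≤ p) (hsp : s ≤ p)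
    (hrs : r⁻¹ + s⁻¹ = 1 + p⁻¹) (x : G) :
    (f ⋆ₗ[μ] g) x ≤ ((fun y ↦ f y ^ r) ⋆ₗ[μ] fun y ↦ g y ^ s) x ^ p⁻¹ *
      (∫⁻ y, f y ^ r ∂μ) ^ (r⁻¹ - p⁻¹) * (∫⁻ y, g y ^ s ∂μ) ^ (s⁻¹ - p⁻¹) := by
  have split (a b : ℝ≥0∞) :
      (a ^ r * b ^ s) ^ p⁻¹ * (a ^ r) ^ (r⁻¹ - p⁻¹) * (b ^ s) ^ (s⁻¹ - p⁻¹) = a * b := by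
    rw [ENNReal.mul_rpow_of_nonneg _ _ (inv_nonneg.2 hp.le)]
    calc _ = ((a ^ r) ^ p⁻¹ * (a ^ r) ^ (r⁻¹ - p⁻¹)) *
          ((b ^ s) ^ p⁻¹ * (b ^ s) ^ (s⁻¹ - p⁻¹)) := by ring
      _ = a * b := by
        rw [ENNReal.rpow_mul_rpow_sub_inv a hp hr hrp, ENNReal.rpow_mul_rpow_sub_inv b hp hs hsp]
  have hg_sub : ∫⁻ y, g (-y + x) ^ s ∂μ = ∫⁻ y, g y ^ s ∂μ := by
    simp_rw [neg_add_eq_sub]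
    exact lintegral_sub_left_eq_self (fun y ↦ g y ^ s) x
  calc (f ⋆ₗ[μ] g) x
      = ∫⁻ y, (f y ^ r * g (-y + x) ^ s) ^ p⁻¹ * (f y ^ r) ^ (r⁻¹ - p⁻¹) *
          (g (-y + x) ^ s) ^ (s⁻¹ - p⁻¹) ∂μ := by
        simp_rw [split]
        rfl
    _ ≤ _ := by
        rw [← hg_sub]
        exact ENNReal.lintegral_rpow_mul_rpow_mul_rpow_le (by fun_prop) (by fun_prop)
          (by fun_prop) (inv_nonneg.2 hp.le) (sub_nonneg.2 (inv_anti₀ hr hrp))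
          (sub_nonneg.2 (inv_anti₀ hs hsp)) (by linarith)

theorem lintegral_lconvolution_rpow_le (hf : AEMeasurable f μ) (hg : AEMeasurable g μ)
    (hp : 0 < p) (hr : 0 < r) (hs : 0 < s) (hrp : r ≤ p) (hsp : s ≤ p)
    (hrs : r⁻¹ + s⁻¹ = 1 + p⁻¹) :
    ∫⁻ x, (f ⋆ₗ[μ] g) x ^ p ∂μ ≤ (∫⁻ x, f x ^ r ∂μ) ^ (p / r) * (∫⁻ x, g x ^ s ∂μ) ^ (p / s) := by
  set A := ∫⁻ x, f x ^ r ∂μ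
  set B := ∫⁻ x, g x ^ s ∂μ
  have mul_rpow_eq (a : ℝ≥0∞) {t : ℝ} (ht : 0 < t) (htp : t ≤ p) :
      a * (a ^ (t⁻¹ - p⁻¹)) ^ p = a ^ (p / t) := by
    have hexp : 0 ≤ (t⁻¹ - p⁻¹) * p := mul_nonneg (sub_nonneg.2 (inv_anti₀ ht htp)) hp.le
    rw [← ENNReal.rpow_mul]
    nth_rewrite 1 [← ENNReal.rpow_one a]
    rw [← ENNReal.rpow_add_of_nonneg _ _ zero_le_one hexp]
    congr 1
    field_simp
    ring
  calc ∫⁻ x, (f ⋆ₗ[μ] g) x ^ p ∂μ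
      ≤ ∫⁻ x, ((fun y ↦ f y ^ r) ⋆ₗ[μ] fun y ↦ g y ^ s) x *
          (A ^ (r⁻¹ - p⁻¹) * B ^ (s⁻¹ - p⁻¹)) ^ p ∂μ := by
        refine lintegral_mono fun x ↦ ?_
        calc (f ⋆ₗ[μ] g) x ^ p
            ≤ (((fun y ↦ f y ^ r) ⋆ₗ[μ] fun y ↦ g y ^ s) x ^ p⁻¹ *
                (A ^ (r⁻¹ - p⁻¹) * B ^ (s⁻¹ - p⁻¹))) ^ p := by
              rw [← mul_assoc]
              gcongr
              exact lconvolution_le_lconvolution_rpow hf hg hp hr hs hrp hsp hrs x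
          _ = _ := by
              rw [ENNReal.mul_rpow_of_nonneg _ _ hp.le, ← ENNReal.rpow_mul,
                inv_mul_cancel₀ hp.ne', ENNReal.rpow_one]
    _ = A * B * (A ^ (r⁻¹ - p⁻¹) * B ^ (s⁻¹ - p⁻¹)) ^ p := by
        rw [lintegral_mul_const'' _ (aemeasurable_lconvolution (by fun_prop) (by fun_prop)),
          lintegral_lconvolution (by fun_prop) (by fun_prop)]
    _ = A ^ (p / r) * B ^ (p / s) := by
        rw [ENNReal.mul_rpow_of_nonneg _ _ hp.le, ← mul_rpow_eq A hr hrp, ← mul_rpow_eq B hs hsp]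
        ring

theorem exists_abs_integral_mul_le_add_memLp {W W₁ W₂ φ : G → ℝ}
    (hW : W = W₁ + W₂) {p p' r : ℝ} (hp : 2 ≤ p) (hpp' : p.HolderConjugate p') (hr : p / 2 ≤ r)
    (hW₁ : MemLp W₁ (ENNReal.ofReal r) μ) (hW₂ : MemLp W₂ ∞ μ) (hφ : AEMeasurable φ μ)
    (hφ_one : ∫⁻ x, ‖φ x‖ₑ ∂μ < ∞) (hφ_conj : ∫⁻ x, ‖φ x‖ₑ ^ p' ∂μ < ∞) :
    ∃ C' : ℝ, 0 ≤ C' ∧ ∃ g : G → ℝ, (∀ y, 0 ≤ g y) ∧ MemLp g (ENNReal.ofReal p) μ ∧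
      ∀ᵐ y ∂μ, |∫ w, W (y - w) * φ w ∂μ| ≤ C' + g y := by
  obtain ⟨V, hV, hV_int, hW₁V⟩ := hW₁.exists_abs_sub_le_one (by positivity) hr
  obtain ⟨M, hM, hW₂M⟩ := hW₂.exists_ae_abs_le
  have hWV : ∀ᵐ x ∂μ, |W x - V x| ≤ 1 + M := hW₂M.mono fun x hx ↦ by
    simp only [hW, Pi.add_apply, add_sub_right_comm]
    linarith [abs_add_le (W₁ x - V x) (W₂ x), hW₁V x]
  set T := (fun x ↦ ‖φ x‖ₑ) ⋆ₗ[μ] fun x ↦ ‖V x‖ₑ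
  have hT_meas : AEMeasurable T μ := aemeasurable_lconvolution hφ.enorm hV.enorm
  have hT : ∫⁻ y, T y ^ p ∂μ < ∞ := by
    have hp'_inv : p'⁻¹ = 1 - p⁻¹ := by
      have := hpp'.inv_add_inv_eq_inv
      rw [inv_one] at this
      linarith
    have hp'_le : p' ≤ p := by
      rw [← inv_le_inv₀ (by positivity) hpp'.symm.pos, hp'_inv]
      linarith [inv_anti₀ two_pos hp]
    have hexp : p'⁻¹ + (p / 2)⁻¹ = 1 + p⁻¹ := by
      rw [hp'_inv, inv_div, div_eq_mul_inv]
      ring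
    refine (lintegral_lconvolution_rpow_le hφ.enorm hV.enorm (by positivity) hpp'.symm.pos
      (by positivity) hp'_le (by linarith) hexp).trans_lt ?_
    exact ENNReal.mul_lt_top
      (ENNReal.rpow_lt_top_of_nonneg (div_pos (by positivity) hpp'.symm.pos).le hφ_conj.ne)
      (ENNReal.rpow_lt_top_of_nonneg (by positivity) hV_int.ne)
  have hT_fin : ∀ᵐ y ∂μ, T y < ∞ := (ae_lt_top' (hT_meas.pow_const p) hT.ne).mono fun y hy ↦
    (ENNReal.rpow_lt_top_iff_of_pos (by positivity)).1 hy
  refine ⟨(1 + M) * (∫⁻ x, ‖φ x‖ₑ ∂μ).toReal, by positivity, fun y ↦ (T y).toReal,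
    fun y ↦ ENNReal.toReal_nonneg, memLp_toReal_of_lintegral_rpow_lt_top hT_meas (by positivity) hT,
    hT_fin.mono fun y hy ↦ ?_⟩
  calc |∫ w, W (y - w) * φ w ∂μ| = ‖∫ w, W (y - w) * φ w ∂μ‖ₑ.toReal := by
        simp [Real.enorm_eq_ofReal_abs]
    _ ≤ (T y + ENNReal.ofReal (1 + M) * ∫⁻ x, ‖φ x‖ₑ ∂μ).toReal :=
        ENNReal.toReal_mono (by finiteness) (enorm_integral_mul_le_lconvolution_add hφ hWV y)
    _ = (1 + M) * (∫⁻ x, ‖φ x‖ₑ ∂μ).toReal + (T y).toReal := by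
        rw [ENNReal.toReal_add hy.ne (by finiteness), ENNReal.toReal_mul,
          ENNReal.toReal_ofReal (by positivity), add_comm]

end Convolution

end MeasureTheory

theorem stmt8_general (N : ℕ) (σ θ : ℝ) (hσN : 2 * σ < (N : ℝ))
    (hθ1 : max 2 ((N : ℝ) / ((N : ℝ) - 2 * σ)) < θ)
    (hθ2 : θ < 2 * (N : ℝ) / ((N : ℝ) - 2 * σ))
    (W W₁ W₂ : (Fin N → ℝ) → ℝ) (hW : W = W₁ + W₂)
    (r : ℝ)
    (hr1 : (N : ℝ) / ((N : ℝ) * (2 - θ) + 2 * σ * θ) < r)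
    (hW₁ : MemLp W₁ (ENNReal.ofReal r) volume)
    (hW₂ : MemLp W₂ ⊤ volume)
    (h : (Fin N → ℝ) → ℝ)
    (hh2 : MemLp h (ENNReal.ofReal 2) volume)
    (hhc : MemLp h (ENNReal.ofReal (2 * (N : ℝ) / ((N : ℝ) - 2 * σ))) volume)
    (F : ℝ → ℝ) (hFmeas : Measurable F)
    (C : ℝ) (hFbound : ∀ t : ℝ, |F t| ≤ C * (|t| ^ 2 + |t| ^ θ)) :
    ∃ C' : ℝ, 0 ≤ C' ∧ ∃ g : (Fin N → ℝ) → ℝ, (∀ y, 0 ≤ g y) ∧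
      MemLp g (ENNReal.ofReal (2 * (N : ℝ) / ((N : ℝ) * (2 - θ) + 2 * σ * θ))) volume ∧
      ∀ᵐ y ∂(volume : Measure (Fin N → ℝ)),
        |∫ w, W (y - w) * F (h w)| ≤ C' + g y := by
  set q := 2 * (N : ℝ) / ((N : ℝ) - 2 * σ) with hq
  have hden : 0 < (N : ℝ) - 2 * σ := by linarith
  have hθ_two : 2 < θ := (le_max_left _ _).trans_lt hθ1
  have hq_lt : q < 2 * θ := by
    have := (le_max_right _ _).trans_lt hθ1
    rw [hq, mul_div_assoc]
    linarith
  have hp_eq := Real.two_mul_div_eq_div_div_sub (θ := θ) hden.ne'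
  have hr : q / (q - θ) / 2 ≤ r := by
    have : q / (q - θ) / 2 = N / ((N : ℝ) * (2 - θ) + 2 * σ * θ) := by rw [← hp_eq]; ring
    exact this ▸ hr1.le
  have hF : ∀ t, |F t| ≤ C * (|t| ^ (2 : ℝ) + |t| ^ θ) := fun t ↦ by
    rw [Real.rpow_two]; exact hFbound t
  have hφ_one : ∫⁻ x, ‖F (h x)‖ₑ < ∞ := by
    simpa using lintegral_enorm_comp_rpow_lt_top hF two_pos hθ_two.le le_rfl
      (by simpa using hθ2.le) hh2 hhc
  have hφ_conj : ∫⁻ x, ‖F (h x)‖ₑ ^ (q / θ) < ∞ :=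
    lintegral_enorm_comp_rpow_lt_top hF two_pos hθ_two.le
      ((one_le_div₀ (by linarith)).2 hθ2.le) (mul_div_cancel₀ q (by positivity)).le hh2 hhc
  rw [hp_eq]
  exact exists_abs_integral_mul_le_add_memLp hW (Real.two_le_div_sub hq_lt.le hθ2)
    (Real.holderConjugate_div_sub_div (by positivity) hθ2) hr hW₁ hW₂
    (hFmeas.comp_aemeasurable hh2.1.aemeasurable) hφ_one hφ_conj

/-- Corollary: with `W = W₁ + W₂`, `W₁ ∈ L^r` for some
`r ∈ (N/(N(2−θ)+2σθ), 2N/(N(2−θ)+2σθ)]` and `W₂ ∈ L^∞`, and `F∘h` as before,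
there are `C' ≥ 0` and `0 ≤ g ∈ L^{2N/(N(2−θ)+2σθ)}` with
`|(W * (F∘h))(y)| ≤ C' + g(y)` for a.e. `y`. -/
theorem stmt8 (N : ℕ) (σ θ : ℝ) (hσ0 : 0 < σ) (hσ1 : σ < 1) (hσN : 2 * σ < (N : ℝ))
    (hθ1 : max 2 ((N : ℝ) / ((N : ℝ) - 2 * σ)) < θ)
    (hθ2 : θ < 2 * (N : ℝ) / ((N : ℝ) - 2 * σ))
    (W W₁ W₂ : (Fin N → ℝ) → ℝ) (hW : W = W₁ + W₂)
    (r : ℝ)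
    (hr1 : (N : ℝ) / ((N : ℝ) * (2 - θ) + 2 * σ * θ) < r)
    (hr2 : r ≤ 2 * (N : ℝ) / ((N : ℝ) * (2 - θ) + 2 * σ * θ))
    (hW₁ : MemLp W₁ (ENNReal.ofReal r) volume)
    (hW₂ : MemLp W₂ ⊤ volume)
    (h : (Fin N → ℝ) → ℝ)
    (hh2 : MemLp h (ENNReal.ofReal 2) volume)
    (hhc : MemLp h (ENNReal.ofReal (2 * (N : ℝ) / ((N : ℝ) - 2 * σ))) volume)
    (F : ℝ → ℝ) (hFmeas : Measurable F)
    (C : ℝ) (hC : 0 < C) (hFbound : ∀ t : ℝ, |F t| ≤ C * (|t| ^ 2 + |t| ^ θ)) :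
    ∃ C' : ℝ, 0 ≤ C' ∧ ∃ g : (Fin N → ℝ) → ℝ, (∀ y, 0 ≤ g y) ∧
      MemLp g (ENNReal.ofReal (2 * (N : ℝ) / ((N : ℝ) * (2 - θ) + 2 * σ * θ))) volume ∧
      ∀ᵐ y ∂(volume : Measure (Fin N → ℝ)),
        |∫ w, W (y - w) * F (h w)| ≤ C' + g y :=
  stmt8_general N σ θ hσN hθ1 hθ2 W W₁ W₂ hW r hr1 hW₁ hW₂ h hh2 hhc F hFmeas C hFbound
end

section
/- Let N ∈ ℕ, N ≥ 1, m > 0 and σ ∈ (1/2, 1). There exists a constant C > 0 such that for every x ≥ 1 one has ∫_{ℝ^N} |ξ|^{2σ−1}·exp( −2x·√(m² + 4π²|ξ|²) ) dξ ≤ C·e^{−2mx}. -/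
open Filter Set MeasureTheory Real

lemma stmt13_key (N : ℕ) (m σ x r : ℝ) (hm : 0 < m) (hσ0 : 1 / 2 < σ) (hσ1 : σ < 1)
    (hx : 1 ≤ x) (hr : 0 ≤ r) :
    r ^ (2 * σ - 1) * Real.exp (-2 * x * Real.sqrt (m ^ 2 + 4 * Real.pi ^ 2 * r ^ 2)) ≤
      Real.exp (-2 * m * x) *
        (Real.exp (2 * m) * ((Nat.factorial (N + 2) : ℝ) * Real.exp 1) * (1 + r) ^ (-(N + 1 : ℝ))) := by
  have hπ : 0 < Real.pi := Real.pi_pos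
  set s := Real.sqrt (m ^ 2 + 4 * Real.pi ^ 2 * r ^ 2) with hs
  have hsm : m ≤ s := by
    rw [hs]
    rw [show m ^ 2 + 4 * Real.pi ^ 2 * r ^ 2 = m ^ 2 + (2 * Real.pi * r) ^ 2 by ring]
    nlinarith [Real.sqrt_le_sqrt (show m ^ 2 ≤ m ^ 2 + (2 * Real.pi * r) ^ 2 by nlinarith [sq_nonneg (2 * Real.pi * r)]),
      Real.sqrt_sq hm.le]
  have hs2 : 2 * Real.pi * r ≤ s := by
    rw [hs, show m ^ 2 + 4 * Real.pi ^ 2 * r ^ 2 = m ^ 2 + (2 * Real.pi * r) ^ 2 by ring]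
    nlinarith [Real.sqrt_le_sqrt (show (2 * Real.pi * r) ^ 2 ≤ m ^ 2 + (2 * Real.pi * r) ^ 2 by
      nlinarith [sq_nonneg m]), Real.sqrt_sq (by positivity : (0:ℝ) ≤ 2 * Real.pi * r)]
  have h1r : (0:ℝ) < 1 + r := by linarith
  -- exponential bound
  have hexp : Real.exp (-2 * x * s) ≤
      Real.exp (-2 * m * x) * Real.exp (2 * m) * Real.exp (-(4 * Real.pi * r)) := by
    rw [← Real.exp_add, ← Real.exp_add]
    apply Real.exp_le_exp.2
    nlinarith [mul_nonneg (sub_nonneg.2 hx) (sub_nonneg.2 hsm)]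
  -- power bound
  have hr1 : r ^ (2 * σ - 1) ≤ 1 + r := by
    calc r ^ (2 * σ - 1) ≤ (1 + r) ^ (2 * σ - 1) :=
          Real.rpow_le_rpow hr (by linarith) (by linarith)
      _ ≤ (1 + r) ^ (1 : ℝ) :=
          Real.rpow_le_rpow_of_exponent_le (by linarith) (by linarith)
      _ = 1 + r := Real.rpow_one _
  -- factorial bound : (1+r)^(N+2) * exp(-(4πr)) ≤ (Nat.factorial (N + 2) : ℝ) * exp 1
  have hfac : (1 + r) * Real.exp (-(4 * Real.pi * r)) ≤
      (Nat.factorial (N + 2) : ℝ) * Real.exp 1 * (1 + r) ^ (-(N + 1 : ℝ)) := by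
    have hpow : (1 + r) ^ (N + 2 : ℕ) ≤ (Nat.factorial (N + 2) : ℝ) * (Real.exp 1 * Real.exp r) := by
      have h := Real.pow_div_factorial_le_exp (1 + r) (show (0:ℝ) ≤ 1 + r by linarith) (N + 2)
      rw [div_le_iff₀ (by positivity)] at h
      calc (1 + r) ^ (N + 2 : ℕ) ≤ Real.exp (1 + r) * (Nat.factorial (N + 2) : ℝ) := h
        _ = (Nat.factorial (N + 2) : ℝ) * (Real.exp 1 * Real.exp r) := by
            rw [Real.exp_add]; ring
    have hsplit : (1 + r : ℝ) =
        (1 + r) ^ (-(N + 1 : ℝ)) * (1 + r) ^ (N + 2 : ℕ) := by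
      rw [← Real.rpow_natCast (1 + r) (N + 2), ← Real.rpow_add h1r]
      push_cast
      rw [show -(N + 1 : ℝ) + (N + 2 : ℝ) = 1 by ring, Real.rpow_one]
    have hne : (0:ℝ) ≤ (1 + r) ^ (-(N + 1 : ℝ)) := Real.rpow_nonneg h1r.le _
    have hstep : (1 + r) ^ (N + 2 : ℕ) * Real.exp (-(4 * Real.pi * r)) ≤
        (Nat.factorial (N + 2) : ℝ) * Real.exp 1 := by
      calc (1 + r) ^ (N + 2 : ℕ) * Real.exp (-(4 * Real.pi * r))
          ≤ (Nat.factorial (N + 2) : ℝ) * (Real.exp 1 * Real.exp r) * Real.exp (-(4 * Real.pi * r)) := by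
            apply mul_le_mul_of_nonneg_right hpow (Real.exp_nonneg _)
        _ = (Nat.factorial (N + 2) : ℝ) * Real.exp 1 * Real.exp (r + -(4 * Real.pi * r)) := by
            rw [Real.exp_add]; ring
        _ ≤ (Nat.factorial (N + 2) : ℝ) * Real.exp 1 * 1 := by
            apply mul_le_mul_of_nonneg_left _ (by positivity)
            rw [← Real.exp_zero]
            apply Real.exp_le_exp.2
            nlinarith [Real.pi_gt_three]
        _ = (Nat.factorial (N + 2) : ℝ) * Real.exp 1 := by ring
    calc (1 + r) * Real.exp (-(4 * Real.pi * r))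
        = (1 + r) ^ (-(N + 1 : ℝ)) * ((1 + r) ^ (N + 2 : ℕ) * Real.exp (-(4 * Real.pi * r))) := by
          rw [← mul_assoc, ← hsplit]
      _ ≤ (1 + r) ^ (-(N + 1 : ℝ)) * ((Nat.factorial (N + 2) : ℝ) * Real.exp 1) :=
          mul_le_mul_of_nonneg_left hstep hne
      _ = (Nat.factorial (N + 2) : ℝ) * Real.exp 1 * (1 + r) ^ (-(N + 1 : ℝ)) := by ring
  calc r ^ (2 * σ - 1) * Real.exp (-2 * x * s)
      ≤ (1 + r) * (Real.exp (-2 * m * x) * Real.exp (2 * m) * Real.exp (-(4 * Real.pi * r))) :=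
        mul_le_mul hr1 hexp (Real.exp_nonneg _) h1r.le
    _ = Real.exp (-2 * m * x) * Real.exp (2 * m) *
        ((1 + r) * Real.exp (-(4 * Real.pi * r))) := by ring
    _ ≤ Real.exp (-2 * m * x) * Real.exp (2 * m) *
        ((Nat.factorial (N + 2) : ℝ) * Real.exp 1 * (1 + r) ^ (-(N + 1 : ℝ))) :=
        mul_le_mul_of_nonneg_left hfac (by positivity)
    _ = Real.exp (-2 * m * x) *
        (Real.exp (2 * m) * ((Nat.factorial (N + 2) : ℝ) * Real.exp 1) * (1 + r) ^ (-(N + 1 : ℝ))) := by ring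

/-- for `N ≥ 1`, `m > 0` and `σ ∈ (1/2, 1)` there is `C > 0` such that
for every `x ≥ 1`,
`∫_{ℝ^N} |ξ|^{2σ−1} exp(−2x√(m² + 4π²|ξ|²)) dξ ≤ C e^{−2mx}`. -/
theorem stmt13 (N : ℕ) (hN : 1 ≤ N) (m σ : ℝ) (hm : 0 < m)
    (hσ0 : 1 / 2 < σ) (hσ1 : σ < 1) :
    ∃ C : ℝ, 0 < C ∧ ∀ x : ℝ, 1 ≤ x →
      (∫ ξ : EuclideanSpace ℝ (Fin N),
        ‖ξ‖ ^ (2 * σ - 1) * Real.exp (-2 * x * Real.sqrt (m ^ 2 + 4 * Real.pi ^ 2 * ‖ξ‖ ^ 2))) ≤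
      C * Real.exp (-2 * m * x) := by
  set K : ℝ := Real.exp (2 * m) * ((Nat.factorial (N + 2) : ℝ) * Real.exp 1) with hK
  have hKpos : 0 < K := by positivity
  have hfr : (Module.finrank ℝ (EuclideanSpace ℝ (Fin N)) : ℝ) < (N + 1 : ℝ) := by
    simp [finrank_euclideanSpace_fin]
  have hG : Integrable (fun ξ : EuclideanSpace ℝ (Fin N) => (1 + ‖ξ‖) ^ (-(N + 1 : ℝ))) :=
    integrable_one_add_norm hfr
  set I : ℝ := ∫ ξ : EuclideanSpace ℝ (Fin N), (1 + ‖ξ‖) ^ (-(N + 1 : ℝ)) with hI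
  have hI0 : 0 ≤ I :=
    integral_nonneg fun ξ => Real.rpow_nonneg (by positivity) _
  refine ⟨K * I + 1, by positivity, fun x hx => ?_⟩
  have hbound : (∫ ξ : EuclideanSpace ℝ (Fin N),
      ‖ξ‖ ^ (2 * σ - 1) * Real.exp (-2 * x * Real.sqrt (m ^ 2 + 4 * Real.pi ^ 2 * ‖ξ‖ ^ 2))) ≤
      ∫ ξ : EuclideanSpace ℝ (Fin N),
        Real.exp (-2 * m * x) * (K * (1 + ‖ξ‖) ^ (-(N + 1 : ℝ))) := by
    apply integral_mono_of_nonneg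
    · filter_upwards with ξ
      positivity
    · exact ((hG.const_mul K).const_mul (Real.exp (-2 * m * x)))
    · filter_upwards with ξ
      have := stmt13_key N m σ x ‖ξ‖ hm hσ0 hσ1 hx (norm_nonneg ξ)
      simpa [hK, mul_assoc] using this
  calc (∫ ξ : EuclideanSpace ℝ (Fin N),
        ‖ξ‖ ^ (2 * σ - 1) * Real.exp (-2 * x * Real.sqrt (m ^ 2 + 4 * Real.pi ^ 2 * ‖ξ‖ ^ 2)))
      ≤ ∫ ξ : EuclideanSpace ℝ (Fin N),
          Real.exp (-2 * m * x) * (K * (1 + ‖ξ‖) ^ (-(N + 1 : ℝ))) := hbound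
    _ = Real.exp (-2 * m * x) * (K * I) := by
        rw [integral_const_mul, integral_const_mul]
    _ ≤ (K * I + 1) * Real.exp (-2 * m * x) := by
        nlinarith [Real.exp_pos (-2 * m * x), mul_nonneg hKpos.le hI0]
end

section
/- Let N ∈ ℕ, a < 1, and let A, m, λ₁ ∈ ℝ. Let φ : ℝ^N → ℝ be a C² function with Δφ = −λ₁·φ on ℝ^N, where Δφ(y) = Σ_{i=1}^N ∂²φ/∂y_i²(y). Define ω(x,y) = x^{1−a}·e^{Ax}·φ(y) for x > 0, y ∈ ℝ^N. Then for all x > 0 and y ∈ ℝ^N: ∂/∂x( x^{a}·∂ω/∂x )(x,y) + x^{a}·Δ_yω(x,y) − m²·x^{a}·ω(x,y) = e^{Ax}·φ(y)·( A(2−a) + x(A² − m² − λ₁) ). In particular, if φ ≥ 0, A ≥ 0 and A² ≥ m² + λ₁, then div(x^{a}∇ω) − m²x^{a}ω ≥ 0 for all x > 0. -/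
/-
The weight is chosen so that the flux is elementary: for `ω = x^{1-a} e^{Ax} φ(y)`,
`x^a ∂ₓω = (1 - a + A x) e^{Ax} φ(y)`, whose `x`-derivative is `(A(2 - a) + A² x) e^{Ax} φ(y)`.
The Laplacian in `y` only sees `φ`, contributing `-λ₁ x^a ω = -λ₁ x e^{Ax} φ(y)`, and the zeroth
order term contributes `-m² x e^{Ax} φ(y)`. Positivity then follows sign by sign.
-/

open Filter Set Real

/-- The Laplacian of `φ : ℝ^N → ℝ` at `y`, as the sum of the second derivatives
of the coordinate slices `s ↦ φ(update y i s)` at `y i`. -/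
noncomputable def lap (N : ℕ) (φ : (Fin N → ℝ) → ℝ) (y : Fin N → ℝ) : ℝ :=
  ∑ i : Fin N, deriv (deriv (fun s : ℝ => φ (Function.update y i s))) (y i)

lemma lap_const_mul (N : ℕ) (c : ℝ) (φ : (Fin N → ℝ) → ℝ) (y : Fin N → ℝ) :
    lap N (fun y' => c * φ y') y = c * lap N φ y := by
  simp only [lap, Finset.mul_sum, deriv_const_mul_field']

lemma hasDerivAt_rpow_mul_exp (p A : ℝ) {t : ℝ} (ht : 0 < t) :
    HasDerivAt (fun s : ℝ => s ^ p * exp (A * s))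
      (p * t ^ (p - 1) * exp (A * t) + t ^ p * (exp (A * t) * A)) t :=
  (hasDerivAt_rpow_const (Or.inl ht.ne')).mul ((hasDerivAt_id t).const_mul A).exp
    |>.congr_deriv (by simp)

lemma rpow_mul_deriv_rpow_one_sub_mul_exp (a A : ℝ) {t : ℝ} (ht : 0 < t) :
    t ^ a * deriv (fun s : ℝ => s ^ (1 - a) * exp (A * s)) t = (1 - a + A * t) * exp (A * t) := by
  have h_neg : t ^ a * t ^ (1 - a - 1) = 1 := by
    rw [← rpow_add ht, show a + (1 - a - 1) = 0 by ring, rpow_zero]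
  have h_one : t ^ a * t ^ (1 - a) = t := by
    rw [← rpow_add ht, show a + (1 - a) = 1 by ring, rpow_one]
  rw [(hasDerivAt_rpow_mul_exp (1 - a) A ht).deriv]
  linear_combination (1 - a) * exp (A * t) * h_neg + A * exp (A * t) * h_one

lemma deriv_rpow_mul_deriv_rpow_one_sub_mul_exp (a A c : ℝ) {x : ℝ} (hx : 0 < x) :
    deriv (fun x' : ℝ => x' ^ a * deriv (fun s : ℝ => s ^ (1 - a) * exp (A * s) * c) x') x
      = (A * (2 - a) + A ^ 2 * x) * exp (A * x) * c := by
  have h_flux : (fun x' : ℝ => x' ^ a * deriv (fun s : ℝ => s ^ (1 - a) * exp (A * s) * c) x')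
      =ᶠ[nhds x] fun x' => (1 - a + A * x') * exp (A * x') * c := by
    filter_upwards [Ioi_mem_nhds hx] with t ht
    rw [deriv_mul_const_field, ← mul_assoc, rpow_mul_deriv_rpow_one_sub_mul_exp a A ht]
  have h_deriv : HasDerivAt (fun x' : ℝ => (1 - a + A * x') * exp (A * x') * c)
      ((A * (2 - a) + A ^ 2 * x) * exp (A * x) * c) x :=
    ((((hasDerivAt_id x).const_mul A).const_add (1 - a)).mul
      ((hasDerivAt_id x).const_mul A).exp).mul_const c |>.congr_deriv (by simp only [id, mul_one]; ring)
  rw [h_flux.deriv_eq, h_deriv.deriv]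

theorem stmt15_general (N : ℕ) (a A m l₁ : ℝ) (ha : a < 1)
    (φ : (Fin N → ℝ) → ℝ)
    (hlap : ∀ y, lap N φ y = -l₁ * φ y) :
    (∀ x : ℝ, 0 < x → ∀ y : Fin N → ℝ,
      deriv (fun x' : ℝ =>
          x' ^ a * deriv (fun x'' : ℝ => x'' ^ (1 - a) * Real.exp (A * x'') * φ y) x') x
        + x ^ a * lap N (fun y' => x ^ (1 - a) * Real.exp (A * x) * φ y') y
        - m ^ 2 * x ^ a * (x ^ (1 - a) * Real.exp (A * x) * φ y)
      = Real.exp (A * x) * φ y * (A * (2 - a) + x * (A ^ 2 - m ^ 2 - l₁))) ∧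
    ((∀ y, 0 ≤ φ y) → 0 ≤ A → m ^ 2 + l₁ ≤ A ^ 2 →
      ∀ x : ℝ, 0 < x → ∀ y : Fin N → ℝ,
        0 ≤ deriv (fun x' : ℝ =>
            x' ^ a * deriv (fun x'' : ℝ => x'' ^ (1 - a) * Real.exp (A * x'') * φ y) x') x
          + x ^ a * lap N (fun y' => x ^ (1 - a) * Real.exp (A * x) * φ y') y
          - m ^ 2 * x ^ a * (x ^ (1 - a) * Real.exp (A * x) * φ y)) := by
  have identity : ∀ x : ℝ, 0 < x → ∀ y : Fin N → ℝ,
      deriv (fun x' : ℝ =>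
          x' ^ a * deriv (fun x'' : ℝ => x'' ^ (1 - a) * Real.exp (A * x'') * φ y) x') x
        + x ^ a * lap N (fun y' => x ^ (1 - a) * Real.exp (A * x) * φ y') y
        - m ^ 2 * x ^ a * (x ^ (1 - a) * Real.exp (A * x) * φ y)
      = Real.exp (A * x) * φ y * (A * (2 - a) + x * (A ^ 2 - m ^ 2 - l₁)) := by
    intro x hx y
    have h_one : x ^ a * x ^ (1 - a) = x := by
      rw [← rpow_add hx, show a + (1 - a) = 1 by ring, rpow_one]
    rw [deriv_rpow_mul_deriv_rpow_one_sub_mul_exp a A (φ y) hx, lap_const_mul, hlap y]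
    linear_combination (-l₁ - m ^ 2) * exp (A * x) * φ y * h_one
  refine ⟨identity, fun hφ hA hAm x hx y => ?_⟩
  rw [identity x hx y]
  have h_drift : 0 ≤ A * (2 - a) := mul_nonneg hA (by linarith)
  have h_mass : 0 ≤ x * (A ^ 2 - m ^ 2 - l₁) := mul_nonneg hx.le (by linarith)
  exact mul_nonneg (mul_nonneg (exp_pos _).le (hφ y)) (add_nonneg h_drift h_mass)

/-- with `a < 1`, `φ` of class `C²` satisfying `Δφ = −λ₁φ`, and
`ω(x,y) = x^{1−a} e^{Ax} φ(y)`, one has for `x > 0`: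
`∂ₓ(xᵃ ∂ₓω) + xᵃ Δ_y ω − m² xᵃ ω = e^{Ax} φ(y) (A(2−a) + x(A² − m² − λ₁))`;
in particular `div(xᵃ∇ω) − m²xᵃω ≥ 0` when `φ ≥ 0`, `A ≥ 0` and `A² ≥ m² + λ₁`. -/
theorem stmt15 (N : ℕ) (a A m l₁ : ℝ) (ha : a < 1)
    (φ : (Fin N → ℝ) → ℝ) (hφ : ContDiff ℝ 2 φ)
    (hlap : ∀ y, lap N φ y = -l₁ * φ y) :
    (∀ x : ℝ, 0 < x → ∀ y : Fin N → ℝ,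
      deriv (fun x' : ℝ =>
          x' ^ a * deriv (fun x'' : ℝ => x'' ^ (1 - a) * Real.exp (A * x'') * φ y) x') x
        + x ^ a * lap N (fun y' => x ^ (1 - a) * Real.exp (A * x) * φ y') y
        - m ^ 2 * x ^ a * (x ^ (1 - a) * Real.exp (A * x) * φ y)
      = Real.exp (A * x) * φ y * (A * (2 - a) + x * (A ^ 2 - m ^ 2 - l₁))) ∧
    ((∀ y, 0 ≤ φ y) → 0 ≤ A → m ^ 2 + l₁ ≤ A ^ 2 →
      ∀ x : ℝ, 0 < x → ∀ y : Fin N → ℝ,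
        0 ≤ deriv (fun x' : ℝ =>
            x' ^ a * deriv (fun x'' : ℝ => x'' ^ (1 - a) * Real.exp (A * x'') * φ y) x') x
          + x ^ a * lap N (fun y' => x ^ (1 - a) * Real.exp (A * x) * φ y') y
          - m ^ 2 * x ^ a * (x ^ (1 - a) * Real.exp (A * x) * φ y)) :=
  stmt15_general N a A m l₁ ha φ hlap
end
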